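/- (Theorem 6, converse fails for Tseitin CNF-ization) There exist a non-CNF formula φ over atoms A = {A₁, A₂}, a CNF formula ψ over A ∪ B (B = {B₁, B₂}) which is the Tseitin CNF-ization of φ (so that φ is equivalent to ∃B.ψ), and a partial truth assignment μ on A such that μ entails ∃B.ψ but μ does not validate ∃B.ψ. Concretely, for φ = (A₁ ∧ A₂) ∨ (A₁ ∧ ¬A₂), its Tseitin encoding ψ = (B₁ ∨ B₂) ∧ (¬B₁ ∨ A₁) ∧ (¬B₁ ∨ A₂) ∧ (B₁ ∨ ¬A₁ ∨ ¬A₂) ∧ (¬B₂ ∨ A₁) ∧ (¬B₂ ∨ ¬A₂) ∧ (B₂ ∨ ¬A₁ ∨ A₂), and μ assigning true to A₁ only: (1) for every total assignment η on A, η ⊨ φ iff there exists a total assignment δ on B with η ∪ δ ⊨ ψ; (2) every total assignment η on A extending μ admits a total assignment δ on B with η ∪ δ ⊨ ψ; and (3) there is no total assignment δ on B with ψ|(μ ∪ δ) = ⊤. -/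

import Mathlib

/-- Propositional formulas over atoms of type `α`, built from the constants
`⊤` (`tr`) and `⊥` (`fls`), atoms, negation, conjunction, disjunction,
implication and bi-implication. -/
inductive PForm (α : Type) : Type
  | tr : PForm α
  | fls : PForm α
  | atom : α → PForm α
  | neg : PForm α → PForm α
  | conj : PForm α → PForm α → PForm α
  | disj : PForm α → PForm α → PForm α
  | impl : PForm α → PForm α → PForm α
  | biimp : PForm α → PForm α → PForm α

namespace PForm

variable {α : Type}

/-- Standard two-valued evaluation under a total truth assignment. -/
def eval (η : α → Bool) : PForm α → Bool
  | tr => true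
  | fls => false
  | atom a => η a
  | neg φ => !(eval η φ)
  | conj φ ψ => eval η φ && eval η ψ
  | disj φ ψ => eval η φ || eval η ψ
  | impl φ ψ => !(eval η φ) || eval η ψ
  | biimp φ ψ => eval η φ == eval η ψ

/-- Simplifying negation: `¬⊤ ⇒ ⊥`, `¬⊥ ⇒ ⊤`. -/
def snot : PForm α → PForm α
  | tr => fls
  | fls => tr
  | φ => neg φ

/-- Simplifying conjunction: `⊤∧φ, φ∧⊤ ⇒ φ`; `⊥∧φ, φ∧⊥ ⇒ ⊥`. -/
def sand : PForm α → PForm α → PForm α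
  | tr, ψ => ψ
  | fls, _ => fls
  | φ, tr => φ
  | _, fls => fls
  | φ, ψ => conj φ ψ

/-- Simplifying disjunction: `⊤∨φ, φ∨⊤ ⇒ ⊤`; `⊥∨φ, φ∨⊥ ⇒ φ`. -/
def sor : PForm α → PForm α → PForm α
  | tr, _ => tr
  | fls, ψ => ψ
  | _, tr => tr
  | φ, fls => φ
  | φ, ψ => disj φ ψ

/-- Simplifying implication: `⊤→φ ⇒ φ`; `⊥→φ ⇒ ⊤`; `φ→⊤ ⇒ ⊤`; `φ→⊥ ⇒ ¬φ`. -/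
def simpImp : PForm α → PForm α → PForm α
  | tr, ψ => ψ
  | fls, _ => tr
  | _, tr => tr
  | φ, fls => snot φ
  | φ, ψ => impl φ ψ

/-- Simplifying bi-implication: `⊤↔φ, φ↔⊤ ⇒ φ`; `⊥↔φ, φ↔⊥ ⇒ ¬φ`. -/
def sIff : PForm α → PForm α → PForm α
  | tr, ψ => ψ
  | fls, ψ => snot ψ
  | φ, tr => φ
  | φ, fls => snot φ
  | φ, ψ => biimp φ ψ

/-- The residual `φ|μ` of `φ` under a partial assignment
`μ : α → Option Bool`: substitute each assigned atom with the corresponding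
constant and simplify recursively through the connectives. -/
def residual (μ : α → Option Bool) : PForm α → PForm α
  | tr => tr
  | fls => fls
  | atom a =>
      match μ a with
      | some true => tr
      | some false => fls
      | none => atom a
  | neg φ => snot (residual μ φ)
  | conj φ ψ => sand (residual μ φ) (residual μ ψ)
  | disj φ ψ => sor (residual μ φ) (residual μ ψ)
  | impl φ ψ => simpImp (residual μ φ) (residual μ ψ)
  | biimp φ ψ => sIff (residual μ φ) (residual μ ψ)

/-- Strong Kleene negation on three-valued `Option Bool` (`none` = unknown). -/
def kneg : Option Bool → Option Bool
  | some b => some (!b)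
  | none => none

/-- Strong Kleene conjunction. -/
def kand : Option Bool → Option Bool → Option Bool
  | some false, _ => some false
  | _, some false => some false
  | some true, some true => some true
  | _, _ => none

/-- Strong Kleene disjunction. -/
def kor : Option Bool → Option Bool → Option Bool
  | some true, _ => some true
  | _, some true => some true
  | some false, some false => some false
  | _, _ => none

/-- Strong Kleene bi-implication. -/
def kiff : Option Bool → Option Bool → Option Bool
  | some a, some b => some (a == b)
  | _, _ => none

/-- Three-valued (strong Kleene) evaluation of a formula under a partial
assignment: assigned atoms get their value, unassigned atoms get `none`. -/
def keval (μ : α → Option Bool) : PForm α → Option Bool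
  | tr => some true
  | fls => some false
  | atom a => μ a
  | neg φ => kneg (keval μ φ)
  | conj φ ψ => kand (keval μ φ) (keval μ ψ)
  | disj φ ψ => kor (keval μ φ) (keval μ ψ)
  | impl φ ψ => kor (kneg (keval μ φ)) (keval μ ψ)
  | biimp φ ψ => kiff (keval μ φ) (keval μ ψ)

/-- The set of atoms occurring in a formula. -/
def atoms : PForm α → Set α
  | tr => ∅
  | fls => ∅
  | atom a => {a}
  | neg φ => atoms φ
  | conj φ ψ => atoms φ ∪ atoms ψ
  | disj φ ψ => atoms φ ∪ atoms ψ
  | impl φ ψ => atoms φ ∪ atoms ψ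
  | biimp φ ψ => atoms φ ∪ atoms ψ

/-- The formula corresponding to a literal `(a, polarity)`. -/
def litForm (l : α × Bool) : PForm α :=
  if l.2 then atom l.1 else neg (atom l.1)

/-- The disjunction of a finite list of literals (a clause);
the empty clause is `⊥`. -/
def clauseForm (c : List (α × Bool)) : PForm α :=
  c.foldr (fun l acc => disj (litForm l) acc) fls

/-- The conjunction of a finite list of clauses (a CNF formula);
the empty CNF is `⊤`. -/
def cnfForm (Γ : List (List (α × Bool))) : PForm α :=
  Γ.foldr (fun c acc => conj (clauseForm c) acc) tr

/-- The cube `⋀μ`: the conjunction of the literals made true by the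
partial assignment `μ`. -/
noncomputable def cube [Fintype α] (μ : α → Option Bool) : PForm α :=
  ((Finset.univ : Finset α).toList.filterMap
    (fun a => (μ a).map (fun b => if b then atom a else neg (atom a)))).foldr conj tr

end PForm

/-- A total assignment `η` extends the partial assignment `μ`. -/
def ExtendsT {α : Type} (μ : α → Option Bool) (η : α → Bool) : Prop :=
  ∀ a b, μ a = some b → η a = b

/-- A partial assignment `μ'` extends the partial assignment `μ`. -/
def ExtendsP {α : Type} (μ μ' : α → Option Bool) : Prop :=
  ∀ a b, μ a = some b → μ' a = some b

/-- `μ` entails `φ`: every total assignment extending `μ` satisfies `φ`. -/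
def Entails {α : Type} (μ : α → Option Bool) (φ : PForm α) : Prop :=
  ∀ η : α → Bool, ExtendsT μ η → PForm.eval η φ = true

section Shannon

variable {A B : Type}

/-- Combine total assignments on `A` and on `B` into one on `A ⊕ B`. -/
def combine (η : A → Bool) (δ : B → Bool) : A ⊕ B → Bool :=
  Sum.elim η δ

/-- View a total assignment on `B` as a partial assignment on `A ⊕ B`. -/
def liftB (δ : B → Bool) : A ⊕ B → Option Bool :=
  Sum.elim (fun _ => none) (fun b => some (δ b))

/-- View a partial assignment on `A` as a partial assignment on `A ⊕ B`. -/
def liftA (μ : A → Option Bool) : A ⊕ B → Option Bool :=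
  Sum.elim μ (fun _ => none)

/-- Combine a partial assignment on `A` with a total assignment on `B`. -/
def pcombine (μ : A → Option Bool) (δ : B → Bool) : A ⊕ B → Option Bool :=
  Sum.elim μ (fun b => some (δ b))

/-- The Shannon expansion of `ψ` with respect to the (finite) atoms `B`:
the disjunction, over all total assignments `δ` on `B`, of the residuals
`ψ|δ`; it contains no atoms of `B`. -/
noncomputable def shannon [Fintype B] [DecidableEq B] (ψ : PForm (A ⊕ B)) : PForm (A ⊕ B) :=
  ((Finset.univ : Finset (B → Bool)).toList.map
    (fun δ => PForm.residual (liftB δ) ψ)).foldr PForm.disj PForm.fls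

end Shannon

/-- The non-CNF formula `φ = (A₁ ∧ A₂) ∨ (A₁ ∧ ¬A₂)` over `A = {A₁, A₂}`. -/
def phiEx : PForm (Fin 2) :=
  PForm.disj (PForm.conj (PForm.atom 0) (PForm.atom 1))
             (PForm.conj (PForm.atom 0) (PForm.neg (PForm.atom 1)))

/-- The Tseitin CNF-ization `ψ` of `φ`, where `B₁ = inr 0` labels `A₁ ∧ A₂`
and `B₂ = inr 1` labels `A₁ ∧ ¬A₂`:
`ψ = (B₁ ∨ B₂) ∧ (¬B₁ ∨ A₁) ∧ (¬B₁ ∨ A₂) ∧ (B₁ ∨ ¬A₁ ∨ ¬A₂) ∧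
     (¬B₂ ∨ A₁) ∧ (¬B₂ ∨ ¬A₂) ∧ (B₂ ∨ ¬A₁ ∨ A₂)`. -/
def psiEx : PForm (Fin 2 ⊕ Fin 2) :=
  PForm.cnfForm
    [ [(Sum.inr 0, true), (Sum.inr 1, true)],
      [(Sum.inr 0, false), (Sum.inl 0, true)],
      [(Sum.inr 0, false), (Sum.inl 1, true)],
      [(Sum.inr 0, true), (Sum.inl 0, false), (Sum.inl 1, false)],
      [(Sum.inr 1, false), (Sum.inl 0, true)],
      [(Sum.inr 1, false), (Sum.inl 1, false)],
      [(Sum.inr 1, true), (Sum.inl 0, false), (Sum.inl 1, true)] ]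

/-- The partial assignment on `A` assigning true to `A₁` only. -/
def muEx : Fin 2 → Option Bool := fun a => if a = 0 then some true else none

/-! Simplification by a partial assignment is sound: on every total extension the residual
evaluates like the formula. Hence a `δ` validating `∃B.ψ` under `μ` is one witness that works
for all extensions of `μ` at once. Under the Tseitin encoding `ψ` of `φ`, however, the labels
are forced to be `B₁ = A₁ ∧ A₂` and `B₂ = A₁ ∧ ¬A₂`, so any witness depends on the value of
`A₂`, which `μ` leaves open. -/

namespace PForm

variable {α : Type}

@[simp]
theorem eval_snot (η : α → Bool) (φ : PForm α) : eval η (snot φ) = !eval η φ := by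
  cases φ <;> rfl

@[simp]
theorem eval_sand (η : α → Bool) (φ ψ : PForm α) :
    eval η (sand φ ψ) = (eval η φ && eval η ψ) := by
  cases φ <;> cases ψ <;> simp [sand, eval]

@[simp]
theorem eval_sor (η : α → Bool) (φ ψ : PForm α) :
    eval η (sor φ ψ) = (eval η φ || eval η ψ) := by
  cases φ <;> cases ψ <;> simp [sor, eval]

@[simp]
theorem eval_simpImp (η : α → Bool) (φ ψ : PForm α) :
    eval η (simpImp φ ψ) = (!eval η φ || eval η ψ) := by
  cases φ <;> cases ψ <;> simp [simpImp, eval]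

@[simp]
theorem eval_sIff (η : α → Bool) (φ ψ : PForm α) :
    eval η (sIff φ ψ) = (eval η φ == eval η ψ) := by
  cases φ <;> cases ψ <;> simp [sIff, eval]

theorem eval_residual {μ : α → Option Bool} {η : α → Bool} (hη : ExtendsT μ η) (φ : PForm α) :
    eval η (residual μ φ) = eval η φ := by
  induction φ with
  | atom a =>
    cases hμ : μ a with
    | none => simp [residual, hμ]
    | some b => cases b <;> simp [residual, hμ, eval, hη a _ hμ]
  | _ => simp_all [residual, eval]

theorem eval_of_residual_eq_tr {μ : α → Option Bool} {η : α → Bool} {φ : PForm α}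
    (hφ : residual μ φ = tr) (hη : ExtendsT μ η) : eval η φ = true := by
  rw [← eval_residual hη, hφ, eval]

end PForm

theorem ExtendsT.pcombine_combine {A B : Type} {μ : A → Option Bool} {η : A → Bool}
    (hη : ExtendsT μ η) (δ : B → Bool) : ExtendsT (pcombine μ δ) (combine η δ) := by
  rintro (a | b) v h
  · exact hη a v h
  · exact Option.some_injective _ h

theorem forall_eval_combine_of_residual_pcombine_eq_tr {A B : Type} {μ : A → Option Bool}
    {δ : B → Bool} {ψ : PForm (A ⊕ B)} (hψ : PForm.residual (pcombine μ δ) ψ = PForm.tr)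
    (η : A → Bool) (hη : ExtendsT μ η) : PForm.eval (combine η δ) ψ = true :=
  PForm.eval_of_residual_eq_tr hψ (hη.pcombine_combine δ)

theorem eval_phiEx (η : Fin 2 → Bool) : PForm.eval η phiEx = η 0 := by
  simp only [phiEx, PForm.eval]
  cases η 0 <;> cases η 1 <;> rfl

theorem eval_combine_psiEx_iff (η δ : Fin 2 → Bool) :
    PForm.eval (combine η δ) psiEx = true ↔
      δ 0 = (η 0 && η 1) ∧ δ 1 = (η 0 && !η 1) ∧ (δ 0 || δ 1) = true := by
  simp only [psiEx, PForm.cnfForm, PForm.clauseForm, PForm.litForm, List.foldr, ↓reduceIte,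
    Bool.false_eq_true, PForm.eval, combine, Sum.elim_inl, Sum.elim_inr]
  cases η 0 <;> cases η 1 <;> cases δ 0 <;> cases δ 1 <;> decide

theorem exists_eval_combine_psiEx_iff (η : Fin 2 → Bool) :
    (∃ δ : Fin 2 → Bool, PForm.eval (combine η δ) psiEx = true) ↔ η 0 = true := by
  simp only [eval_combine_psiEx_iff]
  constructor
  · rintro ⟨δ, h₀, h₁, hor⟩
    cases h : η 0 <;> simp_all
  · intro h
    exact ⟨![η 0 && η 1, η 0 && !η 1], by cases η 1 <;> simp [h]⟩

theorem extendsT_muEx (b : Bool) : ExtendsT muEx ![true, b] := by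
  intro a v h
  fin_cases a <;> simp_all [muEx]

/-- Theorem 6, converse fails for Tseitin CNF-ization:
(1) `φ` is equivalent to `∃B.ψ`: for every total assignment `η` on `A`,
`η ⊨ φ` iff there is a total assignment `δ` on `B` with `η ∪ δ ⊨ ψ`;
(2) `μ = {A₁ ↦ true}` entails `∃B.ψ`: every total assignment `η` on `A`
extending `μ` admits a total `δ` on `B` with `η ∪ δ ⊨ ψ`;
(3) `μ` does not validate `∃B.ψ`: there is no total assignment `δ` on `B`
with `ψ|(μ ∪ δ) = ⊤`. -/
theorem tseitin_entails_not_validates :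
    (∀ η : Fin 2 → Bool, PForm.eval η phiEx = true ↔
      ∃ δ : Fin 2 → Bool, PForm.eval (combine η δ) psiEx = true) ∧
    (∀ η : Fin 2 → Bool, ExtendsT muEx η →
      ∃ δ : Fin 2 → Bool, PForm.eval (combine η δ) psiEx = true) ∧
    ¬ (∃ δ : Fin 2 → Bool, PForm.residual (pcombine muEx δ) psiEx = PForm.tr) := by
  refine ⟨fun η => by rw [eval_phiEx, exists_eval_combine_psiEx_iff], fun η hη => ?_, ?_⟩
  · exact (exists_eval_combine_psiEx_iff η).2 (hη 0 true rfl)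
  · rintro ⟨δ, hδ⟩
    have forced (b : Bool) : δ 0 = b := by
      simpa using ((eval_combine_psiEx_iff _ δ).1
        (forall_eval_combine_of_residual_pcombine_eq_tr hδ _ (extendsT_muEx b))).1
    simpa using (forced true).symm.trans (forced false)
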